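/- With notation as above: if a₁,…,a_q ∈ ℂ are pairwise distinct with minimum gap δ > 0 and w ∈ ℂ avoids all aⱼ, then Σ_{j=1}^{q} log⁺(1/|w − aⱼ|) ≤ log⁺|Σ_{j=1}^{q} 1/(w − aⱼ)| + q·log⁺(2q/δ) + log 2, where log⁺ x = max(log x, 0). -/

import Mathlib

/- If |w - aⱼ| ≥ δ/(2q) for all j, each term is at most log⁺(2q/δ). Otherwise |w - a_u| < δ/(2q) for
one u, every other aⱼ is at distance at least δ - |w - a_u| from w, and the other q - 1 terms of
Σ 1/(w - aⱼ) add up to at most half of 1/|w - a_u|; so the sum has modulus at least 1/(2|w - a_u|),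
which costs the log 2. -/

/-- `log⁺ x = max (log x) 0`. -/
noncomputable def logPlus (x : ℝ) : ℝ := max (Real.log x) 0

open Real Finset

lemma logPlus_eq_posLog : logPlus = posLog := funext fun x => max_comm (log x) 0

lemma posLog_one_div_le_posLog_one_div {x ε : ℝ} (hε : 0 < ε) (h : ε ≤ x) :
    log⁺ (1 / x) ≤ log⁺ (1 / ε) :=
  posLog_le_posLog (one_div_pos.2 (hε.trans_le h)).le (one_div_le_one_div_of_le hε h)

lemma posLog_norm_le_posLog_norm_add_add_log_two {E : Type*} [SeminormedAddCommGroup E] {z t : E}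
    (h : 2 * ‖t‖ ≤ ‖z‖) : log⁺ ‖z‖ ≤ log⁺ ‖z + t‖ + log 2 := by
  have hz : ‖z‖ ≤ 2 * ‖z + t‖ := by
    have := norm_le_add_norm_add z t
    linarith
  calc log⁺ ‖z‖ ≤ log⁺ (2 * ‖z + t‖) := posLog_le_posLog (norm_nonneg _) hz
    _ ≤ log 2 + log⁺ ‖z + t‖ := by exact_mod_cast posLog_nat_mul (n := 2)
    _ = log⁺ ‖z + t‖ + log 2 := add_comm _ _

section NormedDivisionRing

variable {𝕜 ι : Type*} [NormedDivisionRing 𝕜]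

lemma sub_norm_sub_le_norm_sub {a c w : 𝕜} {δ : ℝ} (h : δ ≤ ‖a - c‖) :
    δ - ‖w - c‖ ≤ ‖w - a‖ := by
  have := norm_sub_le_norm_sub_add_norm_sub a w c
  rw [norm_sub_rev a w] at this
  linarith

lemma norm_sum_one_div_sub_le (s : Finset ι) {a : ι → 𝕜} {c w : 𝕜} {δ : ℝ}
    (ha : ∀ j ∈ s, δ ≤ ‖a j - c‖) (hw : ‖w - c‖ < δ) :
    ‖∑ j ∈ s, 1 / (w - a j)‖ ≤ #s * (1 / (δ - ‖w - c‖)) := by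
  refine (norm_sum_le _ _).trans (sum_le_card_nsmul _ _ _ fun j hj => ?_) |>.trans_eq
    (nsmul_eq_mul _ _)
  rw [norm_div, norm_one]
  exact one_div_le_one_div_of_le (sub_pos.2 hw) (sub_norm_sub_le_norm_sub (ha j hj))

lemma posLog_one_div_norm_sub_le_posLog_norm_sum [Fintype ι] {a : ι → 𝕜} {δ : ℝ}
    (hδ : ∀ j u, j ≠ u → δ ≤ ‖a j - a u‖) {w : 𝕜} {u : ι} (hwu : w ≠ a u)
    (hnear : ‖w - a u‖ < δ / (2 * Fintype.card ι)) :
    log⁺ (1 / ‖w - a u‖) ≤ log⁺ ‖∑ j, 1 / (w - a j)‖ + log 2 := by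
  classical
  have hr : 0 < ‖w - a u‖ := norm_pos_iff.2 (sub_ne_zero.2 hwu)
  have hcard : (#(univ.erase u) : ℝ) + 1 = Fintype.card ι := by
    exact_mod_cast card_erase_add_one (mem_univ u)
  have hnr : 2 * #(univ.erase u) * ‖w - a u‖ + 2 * ‖w - a u‖ < δ := by
    rw [← hcard, lt_div_iff₀ (by positivity)] at hnear
    linarith
  have : 0 ≤ 2 * (#(univ.erase u) : ℝ) * ‖w - a u‖ := by positivity
  have htail := norm_sum_one_div_sub_le (univ.erase u)
    (fun j hj => hδ j u (ne_of_mem_erase hj)) (w := w) (by linarith)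
  -- `2n r + r ≤ δ` is exactly `2n / (δ - r) ≤ 1 / r`, where `n = q - 1` and `r = ‖w - a u‖`.
  have hhalf : 2 * ‖∑ j ∈ univ.erase u, 1 / (w - a j)‖ ≤ ‖1 / (w - a u)‖ := by
    rw [norm_div, norm_one]
    refine (mul_le_mul_of_nonneg_left htail zero_le_two).trans ?_
    rw [← mul_assoc, mul_one_div, div_le_div_iff₀ (by linarith) hr]
    linarith
  rw [← add_sum_erase _ _ (mem_univ u)]
  simpa only [norm_div, norm_one] using posLog_norm_le_posLog_norm_add_add_log_two hhalf

end NormedDivisionRing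

theorem sum_logPlus_inv_le_general (q : ℕ) (a : Fin q → ℂ)
    (w : ℂ) (hw : ∀ j, w ≠ a j)
    (δ : ℝ) (hδpos : 0 < δ)
    (hδle : ∀ j u : Fin q, j ≠ u → δ ≤ ‖a j - a u‖) :
    ∑ j : Fin q, logPlus (1 / ‖w - a j‖) ≤
      logPlus ‖∑ j : Fin q, 1 / (w - a j)‖ + q * logPlus (2 * q / δ) +
        Real.log 2 := by
  simp only [logPlus_eq_posLog]
  have hfar : ∀ j, δ / (2 * q) ≤ ‖w - a j‖ → log⁺ (1 / ‖w - a j‖) ≤ log⁺ (2 * q / δ) := by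
    intro j hj
    have := j.pos
    simpa only [one_div_div] using posLog_one_div_le_posLog_one_div (by positivity) hj
  have hlog2 : 0 ≤ log 2 := log_nonneg one_le_two
  by_cases hnear : ∃ u, ‖w - a u‖ < δ / (2 * q)
  · obtain ⟨u, hu⟩ := hnear
    have hq : (1 : ℝ) ≤ q := by exact_mod_cast u.pos
    have htail : ∑ j ∈ univ.erase u, log⁺ (1 / ‖w - a j‖) ≤ q * log⁺ (2 * q / δ) := by
      refine (sum_le_card_nsmul _ _ _ fun j hj => hfar j ?_).trans ?_
      · have := sub_norm_sub_le_norm_sub (w := w) (hδle j u (ne_of_mem_erase hj))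
        have : δ / (2 * q) + δ / (2 * q) ≤ δ := by
          rw [div_mul_eq_div_div_swap, add_halves]
          exact div_le_self hδpos.le hq
        linarith
      · rw [nsmul_eq_mul]
        gcongr
        · exact posLog_nonneg
        · exact_mod_cast (card_erase_le).trans (card_fin q).le
    rw [← add_sum_erase _ _ (mem_univ u)]
    linarith [posLog_one_div_norm_sub_le_posLog_norm_sum hδle (hw u)
      (by simpa only [Fintype.card_fin] using hu)]
  · push Not at hnear
    have := sum_le_card_nsmul univ _ _ fun j _ => hfar j (hnear j)
    rw [card_univ, Fintype.card_fin, nsmul_eq_mul] at this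
    linarith [posLog_nonneg (x := ‖∑ j : Fin q, 1 / (w - a j)‖)]

theorem sum_logPlus_inv_le (q : ℕ) (hq : 2 ≤ q) (a : Fin q → ℂ)
    (ha : Function.Injective a) (w : ℂ) (hw : ∀ j, w ≠ a j)
    (δ : ℝ) (hδpos : 0 < δ)
    (hδle : ∀ j u : Fin q, j ≠ u → δ ≤ ‖a j - a u‖)
    (hδeq : ∃ j u : Fin q, j ≠ u ∧ δ = ‖a j - a u‖) :
    ∑ j : Fin q, logPlus (1 / ‖w - a j‖) ≤
      logPlus ‖∑ j : Fin q, 1 / (w - a j)‖ + q * logPlus (2 * q / δ) +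
        Real.log 2 :=
  sum_logPlus_inv_le_general q a w hw δ hδpos hδle
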